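/- Let L be a finite-dimensional simple Lie algebra over ℂ, let F ∈ L be principal nilpotent, and let σ : L → L be an involutive Lie algebra automorphism such that σ(F) = −F and σ(z) = −z for every z ∈ L with ⁅F, z⁆ = 0. Assume there exists at least one sl₂-triple (h₀, e₀, F) in L with third element F. Then there is exactly one 3-dimensional ℂ-subspace P of L such that σ(P) = P and P is the linear span of the elements of some sl₂-triple (h, e, F) with third element F (in particular, there is a unique σ-invariant principal sl₂-subalgebra of L containing F). -/

import Mathlib

/-!
The automorphism `σ` negates the centralizer `C` of `F`, so `C` is abelian (and `F ≠ 0`).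
For an `sl₂`-triple `(h, e, F)`, elements of `C` are lowest weight vectors, so none has
`ad h`-eigenvalue `2`: thus `e` is determined by `h`, and `ad h - 2` is invertible on `C`.

Existence: averaging a triple `(h₀, e₀, F)` with its `σ`-twist `(σ h₀, -σ e₀, F)` gives a
`σ`-fixed `h` with `h - h₀ ∈ C`; as `C` is abelian, `ad h - 2` is still invertible on `C`, which
lets one correct the averaged `e`. Uniqueness: if the span of `(h', e', F)` is `σ`-stable, then
`σ h' = h' + c • F`, while `σ` negates `h' - h ∈ C`; hence `h' ∈ h + ℂ F`, and the two triples
are conjugate under `exp (ad F)`, so they span the same subspace.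
-/

/-- An element `F` of a finite-dimensional complex Lie algebra is *principal nilpotent*
if `ad F` is a nilpotent endomorphism and the centralizer `ker (ad F)` has dimension
equal to the rank of the Lie algebra (the common dimension of the Cartan subalgebras). -/
def IsPrincipalNilpotent (L : Type*) [LieRing L] [LieAlgebra ℂ L]
    [Module.Finite ℂ L] (F : L) : Prop :=
  IsNilpotent (LieAlgebra.ad ℂ L F) ∧
    Module.finrank ℂ (LinearMap.ker (LieAlgebra.ad ℂ L F)) = LieAlgebra.rank ℂ L

/-- `(h, e, f)` is an `sl₂`-triple: `⁅h,e⁆ = 2e`, `⁅h,f⁆ = -2f`, `⁅e,f⁆ = h`. -/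
def IsSl2TripleL {L : Type*} [LieRing L] [LieAlgebra ℂ L] (h e f : L) : Prop :=
  ⁅h, e⁆ = (2 : ℂ) • e ∧ ⁅h, f⁆ = (-2 : ℂ) • f ∧ ⁅e, f⁆ = h


open Submodule

namespace IsSl2Triple

variable {K L M : Type*} [Field K] [CharZero K] [LieRing L] [LieAlgebra K L]
  [AddCommGroup M] [Module K M] [FiniteDimensional K M] [LieRingModule L M] [LieModule K L M]
  {h e f : L}

/-- `m` is a primitive vector of weight `-μ` for the triple `(-h, f, e)`, and in a
finite-dimensional module such weights are natural numbers. -/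
lemma eq_zero_of_lie_f_eq_zero (t : IsSl2Triple h e f) {m : M} {μ : K}
    (hfm : ⁅f, m⁆ = 0) (hhm : ⁅h, m⁆ = μ • m) (hμ : ∀ n : ℕ, μ ≠ -n) : m = 0 := by
  by_contra hm
  obtain ⟨n, hn⟩ := (⟨hm, by rw [neg_lie, hhm, neg_smul], hfm⟩ :
    t.symm.HasPrimitiveVectorWith m (-μ)).exists_nat
  exact hμ n (by rw [← hn, neg_neg])

end IsSl2Triple

namespace IsSl2TripleL

variable {L : Type*} [LieRing L] [LieAlgebra ℂ L] {h e f : L}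

lemma lie_f_h (ht : IsSl2TripleL h e f) : ⁅f, h⁆ = (2 : ℂ) • f := by
  rw [← lie_skew, ht.2.1, neg_smul, neg_neg]

lemma lie_f_e (ht : IsSl2TripleL h e f) : ⁅f, e⁆ = -h := by
  rw [← lie_skew, ht.2.2]

lemma isSl2Triple (ht : IsSl2TripleL h e f) (hf : f ≠ 0) : IsSl2Triple h e f where
  h_ne_zero := by
    rintro rfl
    exact hf (by simpa using ht.2.1.symm)
  lie_e_f := ht.2.2
  lie_h_e_nsmul := by rw [ht.1, ofNat_smul_eq_nsmul]
  lie_h_f_nsmul := by rw [ht.2.1, neg_smul, ofNat_smul_eq_nsmul]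

lemma eq_zero_of_lie_f_eq_zero [FiniteDimensional ℂ L] (ht : IsSl2TripleL h e f) {w : L}
    (hfw : ⁅f, w⁆ = 0) (hhw : ⁅h, w⁆ = (2 : ℂ) • w) : w = 0 := by
  by_cases hf : f = 0
  · have hh : h = 0 := by rw [← ht.2.2, hf, lie_zero]
    rw [hh, zero_lie, eq_comm, smul_eq_zero] at hhw
    exact hhw.resolve_left two_ne_zero
  · refine (ht.isSl2Triple hf).eq_zero_of_lie_f_eq_zero hfw hhw fun n hn ↦ ?_
    have : ((n + 2 : ℕ) : ℂ) = 0 := by push_cast; linear_combination hn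
    exact absurd (Nat.cast_eq_zero.mp this) (by omega)

lemma e_unique [FiniteDimensional ℂ L] {e' : L} (ht : IsSl2TripleL h e f)
    (ht' : IsSl2TripleL h e' f) : e = e' :=
  sub_eq_zero.mp <| ht.eq_zero_of_lie_f_eq_zero
    (by rw [lie_sub, ht.lie_f_e, ht'.lie_f_e, sub_self]) (by rw [lie_sub, ht.1, ht'.1, smul_sub])

lemma linearIndependent (ht : IsSl2TripleL h e f) (hf : f ≠ 0) :
    LinearIndependent ℂ ![h, e, f] := by
  have t := ht.isSl2Triple hf
  have hinj : Function.Injective (![0, 2, -2] : Fin 3 → ℂ) := by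
    intro i j hij
    fin_cases i <;> fin_cases j <;> first | rfl | norm_num at hij
  refine Module.End.eigenvectors_linearIndependent' (LieAlgebra.ad ℂ L h) _ hinj ![h, e, f]
    fun i ↦ ?_
  fin_cases i
  · exact ⟨Module.End.mem_eigenspace_iff.mpr (by simp), t.h_ne_zero⟩
  · exact ⟨Module.End.mem_eigenspace_iff.mpr (by simpa using ht.1), t.e_ne_zero⟩
  · exact ⟨Module.End.mem_eigenspace_iff.mpr (by simpa using ht.2.1), hf⟩

lemma finrank_span (ht : IsSl2TripleL h e f) (hf : f ≠ 0) :
    Module.finrank ℂ (span ℂ {h, e, f}) = 3 := by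
  have hrange : Set.range ![h, e, f] = {h, e, f} := by
    rw [Matrix.range_cons, Matrix.range_cons_cons_empty, Set.singleton_union]
  rw [← hrange, finrank_span_eq_card (ht.linearIndependent hf), Fintype.card_fin]

/-- The image of `(h, e, f)` under `exp ((t / 2) • ad f)`. -/
lemma add_smul_f (ht : IsSl2TripleL h e f) (t : ℂ) :
    IsSl2TripleL (h + t • f) (e - (t / 2) • h - (t ^ 2 / 4) • f) f := by
  refine ⟨?_, ?_, ?_⟩
  · simp only [add_lie, lie_sub, smul_lie, lie_smul, lie_self, ht.1, ht.2.1, ht.lie_f_e, ht.lie_f_h]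
    module
  · rw [add_lie, smul_lie, lie_self, ht.2.1]
    module
  · simp only [sub_lie, smul_lie, lie_self, ht.2.2, ht.2.1]
    module

lemma map_of_map_f_eq_neg {L' : Type*} [LieRing L'] [LieAlgebra ℂ L'] (ht : IsSl2TripleL h e f)
    (σ : L →ₗ⁅ℂ⁆ L') {f' : L'} (hσf : σ f = -f') : IsSl2TripleL (σ h) (-σ e) f' := by
  have hf' : f' = -σ f := by rw [hσf, neg_neg]
  refine ⟨?_, ?_, ?_⟩
  · rw [lie_neg, ← σ.map_lie, ht.1, map_smul, smul_neg]
  · rw [hf', lie_neg, ← σ.map_lie, ht.2.1, map_smul, smul_neg]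
  · rw [hf', neg_lie, lie_neg, neg_neg, ← σ.map_lie, ht.2.2]

lemma exists_eq_add_smul_of_mem_span (ht : IsSl2TripleL h e f) (hf : f ≠ 0) {x : L}
    (hx : x ∈ span ℂ {h, e, f}) (hxf : ⁅x, f⁆ = (-2 : ℂ) • f) : ∃ c : ℂ, x = h + c • f := by
  obtain ⟨a, b, c, rfl⟩ := mem_span_triple.mp hx
  have hrel : b • h + (2 - 2 * a) • f = 0 := by
    simp only [add_lie, smul_lie, lie_self, ht.2.1, ht.2.2] at hxf
    linear_combination (norm := module) hxf
  have hb : b = 0 := by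
    have := congr_arg (⁅f, ·⁆) hrel
    simp only [lie_add, lie_smul, lie_self, ht.lie_f_h, lie_zero] at this
    simpa [hf] using this
  have ha : a = 1 := by
    rw [hb, zero_smul, zero_add, smul_eq_zero] at hrel
    linear_combination -(hrel.resolve_right hf) / 2
  exact ⟨c, by rw [ha, hb]; module⟩

end IsSl2TripleL

section Centralizer

variable {L : Type*} [LieRing L] [LieAlgebra ℂ L] [FiniteDimensional ℂ L]

/-- `ad h - 2` preserves the centralizer of `f`; being injective there, it is onto, so the
defect `⁅h, e₁⁆ - 2 • e₁`, which lies in the centralizer, can be corrected. -/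
lemma exists_isSl2TripleL {h e₁ f : L} (hhf : ⁅h, f⁆ = (-2 : ℂ) • f) (he₁f : ⁅e₁, f⁆ = h)
    (hinj : ∀ y : L, ⁅f, y⁆ = 0 → ⁅h, y⁆ = (2 : ℂ) • y → y = 0) : ∃ e, IsSl2TripleL h e f := by
  set C := LinearMap.ker (LieAlgebra.ad ℂ L f)
  have hfh : ⁅f, h⁆ = (2 : ℂ) • f := by rw [← lie_skew, hhf, neg_smul, neg_neg]
  have hfe₁ : ⁅f, e₁⁆ = -h := by rw [← lie_skew, he₁f]
  set T : Module.End ℂ L := LieAlgebra.ad ℂ L h - (2 : ℂ) • 1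
  have hT : ∀ y, T y = ⁅h, y⁆ - (2 : ℂ) • y := fun _ ↦ rfl
  have hC : ∀ y ∈ C, T y ∈ C := by
    intro y hy
    rw [LinearMap.mem_ker, LieAlgebra.ad_apply] at hy ⊢
    rw [hT, lie_sub, leibniz_lie, hfh, lie_smul]
    simp [hy]
  have hg : Function.Surjective (T.restrict hC) := by
    refine LinearMap.injective_iff_surjective.mp fun y y' hyy' ↦ ?_
    rw [← sub_eq_zero, ← map_sub] at hyy'
    have hfy : ⁅f, (y - y' : L)⁆ = 0 := (y - y').2
    have hhy : ⁅h, (y - y' : L)⁆ - (2 : ℂ) • (y - y' : L) = 0 := congr_arg Subtype.val hyy'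
    exact Subtype.ext (sub_eq_zero.mp (hinj _ hfy (sub_eq_zero.mp hhy)))
  have hd : ⁅h, e₁⁆ - (2 : ℂ) • e₁ ∈ C := by
    rw [LinearMap.mem_ker, LieAlgebra.ad_apply, lie_sub, lie_smul, leibniz_lie, hfh, hfe₁]
    simp [hfe₁]
  obtain ⟨y, hy⟩ := hg ⟨-(⁅h, e₁⁆ - (2 : ℂ) • e₁), C.neg_mem hd⟩
  have hfy : ⁅f, (y : L)⁆ = 0 := y.2
  have hhy : ⁅h, (y : L)⁆ - (2 : ℂ) • (y : L) = -(⁅h, e₁⁆ - (2 : ℂ) • e₁) :=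
    congr_arg Subtype.val hy
  refine ⟨e₁ + y, ?_, hhf, ?_⟩
  · rw [lie_add]
    linear_combination (norm := module) hhy
  · rw [add_lie, he₁f, ← lie_skew, hfy, neg_zero, add_zero]

end Centralizer

section Involution

variable {L : Type*} [LieRing L] [LieAlgebra ℂ L] {F : L} {σ : L →ₗ⁅ℂ⁆ L}

lemma lie_eq_zero_of_mem_centralizer (hσZ : ∀ z : L, ⁅F, z⁆ = 0 → σ z = -z) {z w : L}
    (hz : ⁅F, z⁆ = 0) (hw : ⁅F, w⁆ = 0) : ⁅z, w⁆ = 0 := by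
  have hzw : σ ⁅z, w⁆ = -⁅z, w⁆ :=
    hσZ _ (by rw [leibniz_lie, hz, hw, zero_lie, lie_zero, add_zero])
  rw [σ.map_lie, hσZ z hz, hσZ w hw, neg_lie, lie_neg, neg_neg, eq_neg_iff_add_eq_zero,
    ← two_smul ℂ, smul_eq_zero] at hzw
  exact hzw.resolve_left two_ne_zero

lemma ne_zero_of_map_centralizer_eq_neg [LieAlgebra.IsSimple ℂ L]
    (hσZ : ∀ z : L, ⁅F, z⁆ = 0 → σ z = -z) : F ≠ 0 := by
  rintro rfl
  exact LieAlgebra.IsSimple.non_abelian (R := ℂ)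
    ⟨fun x y ↦ lie_eq_zero_of_mem_centralizer hσZ (zero_lie x) (zero_lie y)⟩

variable [FiniteDimensional ℂ L]

lemma exists_isSl2TripleL_map_eq (hinv : ∀ x, σ (σ x) = x) (hσF : σ F = -F)
    (hσZ : ∀ z : L, ⁅F, z⁆ = 0 → σ z = -z) {h₀ e₀ : L} (ht₀ : IsSl2TripleL h₀ e₀ F) :
    ∃ h e : L, IsSl2TripleL h e F ∧ σ h = h ∧ σ e = -e := by
  have ht₁ := ht₀.map_of_map_f_eq_neg σ hσF
  set h : L := (2⁻¹ : ℂ) • (h₀ + σ h₀)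
  have hσh : σ h = h := by rw [map_smul, map_add, hinv, add_comm]
  have hhF : ⁅h, F⁆ = (-2 : ℂ) • F := by
    rw [smul_lie, add_lie, ht₀.2.1, ht₁.2.1]
    module
  have he₁F : ⁅(2⁻¹ : ℂ) • (e₀ + -σ e₀), F⁆ = h := by rw [smul_lie, add_lie, ht₀.2.2, ht₁.2.2]
  have hFh : ⁅F, h₀ - h⁆ = 0 := by
    rw [← lie_skew, sub_lie, hhF, ht₀.2.1, sub_self, neg_zero]
  obtain ⟨e, ht⟩ := exists_isSl2TripleL hhF he₁F fun y hFy hhy ↦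
    ht₀.eq_zero_of_lie_f_eq_zero hFy <| by
      rw [← hhy, ← sub_eq_zero, ← sub_lie, lie_eq_zero_of_mem_centralizer hσZ hFh hFy]
  have hσe : e = -σ e := ht.e_unique (hσh ▸ ht.map_of_map_f_eq_neg σ hσF)
  exact ⟨h, e, ht, hσh, neg_eq_iff_eq_neg.mp hσe.symm⟩

lemma span_eq_of_map_span_eq (hσF : σ F = -F) (hσZ : ∀ z : L, ⁅F, z⁆ = 0 → σ z = -z)
    (hF : F ≠ 0) {h e h' e' : L} (ht : IsSl2TripleL h e F) (hσh : σ h = h)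
    (ht' : IsSl2TripleL h' e' F)
    (hmap : (span ℂ {h', e', F}).map σ.toLinearMap = span ℂ {h', e', F}) :
    span ℂ {h', e', F} = span ℂ {h, e, F} := by
  have hσh'_mem : σ h' ∈ span ℂ {h', e', F} :=
    hmap ▸ mem_map_of_mem (subset_span (by simp))
  obtain ⟨c, hc⟩ := ht'.exists_eq_add_smul_of_mem_span hF hσh'_mem
    (ht'.map_of_map_f_eq_neg σ hσF).2.1
  have hh' : h' = h + (-c / 2) • F := by
    have := hσZ (h' - h) (by rw [lie_sub, ht'.lie_f_h, ht.lie_f_h, sub_self])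
    rw [map_sub, hc, hσh] at this
    linear_combination (norm := module) (2⁻¹ : ℂ) • this
  subst hh'
  obtain rfl := ht'.e_unique (ht.add_smul_f _)
  refine eq_of_le_of_finrank_eq (span_le.mpr ?_)
    ((ht'.finrank_span hF).trans (ht.finrank_span hF).symm)
  have mem : ∀ x ∈ ({h, e, F} : Set L), x ∈ span ℂ {h, e, F} := fun x hx ↦ subset_span hx
  simp only [Set.insert_subset_iff, Set.singleton_subset_iff, SetLike.mem_coe]
  exact ⟨add_mem (mem h (by simp)) (smul_mem _ _ (mem F (by simp))),
    sub_mem (sub_mem (mem e (by simp)) (smul_mem _ _ (mem h (by simp))))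
      (smul_mem _ _ (mem F (by simp))), mem F (by simp)⟩

end Involution

theorem unique_sigma_invariant_sl2_general
    {L : Type*} [LieRing L] [LieAlgebra ℂ L] [FiniteDimensional ℂ L]
    [LieAlgebra.IsSimple ℂ L] (F : L)
    (σ : L →ₗ⁅ℂ⁆ L) (hinv : ∀ x, σ (σ x) = x)
    (hσF : σ F = -F) (hσZ : ∀ z : L, ⁅F, z⁆ = 0 → σ z = -z)
    (hex : ∃ h₀ e₀ : L, IsSl2TripleL h₀ e₀ F) :
    ∃! P : Submodule ℂ L,
      Module.finrank ℂ P = 3 ∧ P.map σ.toLinearMap = P ∧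
      ∃ h e : L, IsSl2TripleL h e F ∧ P = Submodule.span ℂ {h, e, F} := by
  have hF : F ≠ 0 := ne_zero_of_map_centralizer_eq_neg hσZ
  obtain ⟨h₀, e₀, ht₀⟩ := hex
  obtain ⟨h, e, ht, hσh, hσe⟩ := exists_isSl2TripleL_map_eq hinv hσF hσZ ht₀
  have hle : (span ℂ {h, e, F}).map σ.toLinearMap ≤ span ℂ {h, e, F} := by
    refine (map_span_le _ _ _).mpr ?_
    simp only [Set.mem_insert_iff, Set.mem_singleton_iff, forall_eq_or_imp, forall_eq,
      LieHom.coe_toLinearMap, hσh, hσe, hσF, neg_mem_iff]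
    exact ⟨subset_span (by simp), subset_span (by simp), subset_span (by simp)⟩
  refine ⟨span ℂ {h, e, F}, ⟨ht.finrank_span hF,
    le_antisymm hle fun x hx ↦ ⟨σ x, hle ⟨x, hx, rfl⟩, hinv x⟩, h, e, ht, rfl⟩, ?_⟩
  rintro _ ⟨-, hmap, h', e', ht', rfl⟩
  exact span_eq_of_map_span_eq hσF hσZ hF ht hσh ht' hmap

/-- For an involutive Lie algebra automorphism `σ` negating a principal nilpotent `F`
and its centralizer, there is a unique `σ`-invariant 3-dimensional subspace of `L`
spanned by an `sl₂`-triple with third element `F` (the unique `σ`-invariant principal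
`sl₂`-subalgebra containing `F`). -/
theorem unique_sigma_invariant_sl2
    {L : Type*} [LieRing L] [LieAlgebra ℂ L] [FiniteDimensional ℂ L]
    [LieAlgebra.IsSimple ℂ L] (F : L) (hF : IsPrincipalNilpotent L F)
    (σ : L →ₗ⁅ℂ⁆ L) (hinv : ∀ x, σ (σ x) = x)
    (hσF : σ F = -F) (hσZ : ∀ z : L, ⁅F, z⁆ = 0 → σ z = -z)
    (hex : ∃ h₀ e₀ : L, IsSl2TripleL h₀ e₀ F) :
    ∃! P : Submodule ℂ L,
      Module.finrank ℂ P = 3 ∧ P.map σ.toLinearMap = P ∧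
      ∃ h e : L, IsSl2TripleL h e F ∧ P = Submodule.span ℂ {h, e, F} :=
  unique_sigma_invariant_sl2_general F σ hinv hσF hσZ hex
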